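/- arXiv:1712.06095 — 6 statements merged into one kernel-verified Lean document; each statement's English description precedes it below -/
import Mathlib

section
/- Suppose β, β̄, σ, σ̄ ∈ K satisfy β² = β̄² = 1 and σ² = σ̄² = 1 and σ^{gcd(n,n−2)} = σ̄^{gcd(n,n−2)} = 1, and suppose f, F ∈ {0,…,m−1} and s, t ∈ {0,…,n−1} satisfy gcd(t,n) = 1, m ∣ 2f, m ∣ nF, m ∣ 2F, q^f = β·β̄·σ̄^s and q^F = σ·σ̄^t. Let τ₁ ∈ {0,…,n−1} be such that t·τ₁ ≡ 1 (mod n), let τ₂ ∈ {0,…,n−1} be such that τ₂ ≡ −τ₁·s (mod n), let f̄ ∈ {0,…,m−1} be such that f̄ ≡ −f − F·τ₂ (mod m), and let F̄ ∈ {0,…,m−1} be such that F̄ ≡ −F·τ₁ (mod m). Then gcd(τ₁,n) = 1, m ∣ 2f̄, m ∣ nF̄, m ∣ 2F̄, q^{f̄} = β̄·β·σ^{τ₂} and q^{F̄} = σ̄·σ^{τ₁}. In particular (β,σ) ~ (β̄,σ̄) implies (β̄,σ̄) ~ (β,σ). -/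
/-!
The inverse data come from inverting the witnesses: reading `q^F = σ·σ'^t` to the power `τ₁`
and using `t·τ₁ ≡ 1 (mod n)`, `σ'^n = 1` gives `q^{F'} · σ'·σ^{τ₁} = 1`; similarly
`q^f · (q^F)^{τ₂}` collapses to `β·β'·σ^{τ₂}` because `s + t·τ₂ ≡ 0 (mod n)`. Since all of
`β, β', σ, σ'` square to `1`, the products in question are their own inverses, which turns these
identities into the required equations for `q^{f'}` and `q^{F'}`. The divisibility conditions
transfer because `f' + f + F·τ₂` and `F' + F·τ₁` are multiples of `m`.
-/

/-- The set of parameter pairs `(β, σ)` with `β² = 1` and `σ^{gcd(n, n-2)} = 1`. -/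
def taftSet (K : Type*) [Field K] (n : ℕ) : Set (K × K) :=
  {p | p.1 ^ 2 = 1 ∧ p.2 ^ Nat.gcd n (n - 2) = 1}

/-- `(β, σ) ~ (β', σ')` iff there exist `f, F ∈ {0,…,m-1}` and `s, t ∈ {0,…,n-1}` with
`gcd(t, n) = 1`, `m ∣ 2f`, `m ∣ nF`, `m ∣ 2F`, `q^f = β·β'·σ'^s` and `q^F = σ·σ'^t`. -/
def taftRel {K : Type*} [Field K] (m n : ℕ) (q : K) (p p' : K × K) : Prop :=
  ∃ f F s t : ℕ, f ≤ m - 1 ∧ F ≤ m - 1 ∧ s ≤ n - 1 ∧ t ≤ n - 1 ∧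
    Nat.gcd t n = 1 ∧ m ∣ 2 * f ∧ m ∣ n * F ∧ m ∣ 2 * F ∧
    q ^ f = p.1 * p'.1 * p'.2 ^ s ∧ q ^ F = p.2 * p'.2 ^ t

lemma natCast_dvd_add_of_intModEq_neg {m a b : ℕ} (h : (a : ℤ) ≡ -(b : ℤ) [ZMOD m]) :
    m ∣ a + b :=
  Int.natCast_dvd_natCast.mp (by push_cast; simpa only [sub_neg_eq_add] using h.symm.dvd)

lemma dvd_mul_of_dvd_add {m a b c : ℕ} (hab : m ∣ a + b) (hcb : m ∣ c * b) : m ∣ c * a :=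
  (Nat.dvd_add_left hcb).mp (by rw [← mul_add]; exact dvd_mul_of_dvd_right hab c)

lemma add_mul_modEq_zero_of_modEq {n s t τ₁ τ₂ : ℕ} (hτ₁ : (t : ℤ) * τ₁ ≡ 1 [ZMOD n])
    (hτ₂ : (τ₂ : ℤ) ≡ -((τ₁ : ℤ) * s) [ZMOD n]) : s + t * τ₂ ≡ 0 [MOD n] := by
  rw [← Int.natCast_modEq_iff]
  push_cast
  calc (s : ℤ) + t * τ₂ ≡ s + t * -(τ₁ * s) [ZMOD n] := (hτ₂.mul_left _).add_left _
    _ = s - t * τ₁ * s := by ring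
    _ ≡ s - 1 * s [ZMOD n] := (hτ₁.mul_right _).sub_left _
    _ = 0 := by ring

section Inversion

variable {M : Type*} [CommMonoid M] {q β β' σ σ' : M} {m n : ℕ}

lemma taftRel_symm_pow_F_eq {F t τ F' : ℕ} (hq : IsPrimitiveRoot q m) (hσ : σ ^ 2 = 1)
    (hσ' : σ' ^ 2 = 1) (hσ'n : σ' ^ n = 1) (hqF : q ^ F = σ * σ' ^ t)
    (hτ : t * τ ≡ 1 [MOD n]) (hF' : m ∣ F' + F * τ) : q ^ F' = σ' * σ ^ τ := by
  have hprod : q ^ F' * (σ' * σ ^ τ) = 1 :=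
    calc q ^ F' * (σ' * σ ^ τ) = q ^ F' * (σ ^ τ * σ' ^ (t * τ)) := by
          rw [pow_eq_pow_of_modEq hτ hσ'n, pow_one, mul_comm σ']
      _ = q ^ (F' + F * τ) := by rw [pow_add, pow_mul q F τ, hqF, mul_pow, ← pow_mul]
      _ = 1 := (hq.pow_eq_one_iff_dvd _).mpr hF'
  refine left_inv_eq_right_inv hprod ?_
  rw [← sq, mul_pow, pow_right_comm, hσ, hσ', one_pow, one_mul]

lemma taftRel_symm_pow_f_eq {f F s t τ f' : ℕ} (hq : IsPrimitiveRoot q m) (hβ : β ^ 2 = 1)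
    (hβ' : β' ^ 2 = 1) (hσ : σ ^ 2 = 1) (hσ'n : σ' ^ n = 1)
    (hqf : q ^ f = β * β' * σ' ^ s) (hqF : q ^ F = σ * σ' ^ t)
    (hτ : s + t * τ ≡ 0 [MOD n]) (hf' : m ∣ f' + (f + F * τ)) :
    q ^ f' = β' * β * σ ^ τ := by
  have hprod : q ^ f' * (β' * β * σ ^ τ) = 1 :=
    calc q ^ f' * (β' * β * σ ^ τ) = q ^ f' * (β * β' * σ ^ τ * σ' ^ (s + t * τ)) := by
          rw [pow_eq_pow_of_modEq hτ hσ'n, pow_zero, mul_one, mul_comm β']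
      _ = q ^ f' * (β * β' * σ' ^ s * (σ * σ' ^ t) ^ τ) := by
          rw [mul_pow, ← pow_mul, pow_add]; ac_rfl
      _ = q ^ (f' + (f + F * τ)) := by rw [pow_add, pow_add, pow_mul, hqf, hqF, mul_assoc]
      _ = 1 := (hq.pow_eq_one_iff_dvd _).mpr hf'
  refine left_inv_eq_right_inv hprod ?_
  rw [← sq, mul_pow, mul_pow, pow_right_comm, hβ', hβ, hσ, one_pow, one_mul, one_mul]

end Inversion

theorem taftRel_symm_data_general {K : Type*} [Field K] (m n : ℕ)
    (q : K) (hq : IsPrimitiveRoot q m)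
    (β β' σ σ' : K) (hβ : β ^ 2 = 1) (hβ' : β' ^ 2 = 1)
    (hσ2 : σ ^ 2 = 1) (hσ'2 : σ' ^ 2 = 1)
    (hσ' : σ' ^ Nat.gcd n (n - 2) = 1)
    (f F s t : ℕ)
    (h2f : m ∣ 2 * f) (hnF : m ∣ n * F) (h2F : m ∣ 2 * F)
    (hqf : q ^ f = β * β' * σ' ^ s) (hqF : q ^ F = σ * σ' ^ t)
    (τ₁ τ₂ f' F' : ℕ) (hτ₁ : τ₁ ≤ n - 1) (hτ₂ : τ₂ ≤ n - 1)
    (hf'b : f' ≤ m - 1) (hF'b : F' ≤ m - 1)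
    (hτ₁def : ((t : ℤ) * τ₁) ≡ 1 [ZMOD (n : ℤ)])
    (hτ₂def : (τ₂ : ℤ) ≡ -((τ₁ : ℤ) * s) [ZMOD (n : ℤ)])
    (hf'def : (f' : ℤ) ≡ -(f : ℤ) - (F : ℤ) * τ₂ [ZMOD (m : ℤ)])
    (hF'def : (F' : ℤ) ≡ -((F : ℤ) * τ₁) [ZMOD (m : ℤ)]) :
    Nat.gcd τ₁ n = 1 ∧ m ∣ 2 * f' ∧ m ∣ n * F' ∧ m ∣ 2 * F' ∧
      q ^ f' = β' * β * σ ^ τ₂ ∧ q ^ F' = σ' * σ ^ τ₁ ∧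
      taftRel m n q (β', σ') (β, σ) := by
  have hσ'n : σ' ^ n = 1 := by
    obtain ⟨c, hc⟩ := Nat.gcd_dvd_left n (n - 2)
    rw [hc, pow_mul, hσ', one_pow]
  have htτ₁ : t * τ₁ ≡ 1 [MOD n] := Int.natCast_modEq_iff.mp (by exact_mod_cast hτ₁def)
  have hcop : Nat.gcd τ₁ n = 1 := Nat.coprime_of_mul_modEq_one t (by rwa [mul_comm])
  have hdf : m ∣ f' + (f + F * τ₂) :=
    natCast_dvd_add_of_intModEq_neg (by push_cast; rwa [neg_add'])
  have hdF : m ∣ F' + F * τ₁ := natCast_dvd_add_of_intModEq_neg (by push_cast; exact hF'def)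
  have h2f' : m ∣ 2 * f' :=
    dvd_mul_of_dvd_add hdf (by rw [mul_add, ← mul_assoc]; exact dvd_add h2f (h2F.mul_right _))
  have hnF' : m ∣ n * F' := dvd_mul_of_dvd_add hdF (by rw [← mul_assoc]; exact hnF.mul_right _)
  have h2F' : m ∣ 2 * F' := dvd_mul_of_dvd_add hdF (by rw [← mul_assoc]; exact h2F.mul_right _)
  have hqf' : q ^ f' = β' * β * σ ^ τ₂ := taftRel_symm_pow_f_eq hq hβ hβ' hσ2 hσ'n hqf hqF
    (add_mul_modEq_zero_of_modEq hτ₁def hτ₂def) hdf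
  have hqF' : q ^ F' = σ' * σ ^ τ₁ := taftRel_symm_pow_F_eq hq hσ2 hσ'2 hσ'n hqF htτ₁ hdF
  exact ⟨hcop, h2f', hnF', h2F', hqf', hqF',
    f', F', τ₂, τ₁, hf'b, hF'b, hτ₂, hτ₁, hcop, h2f', hnF', h2F', hqf', hqF'⟩

/-- Symmetry of `~`: from witnessing data `(f, F, s, t)` for `(β,σ) ~ (β',σ')` one constructs,
via `τ₁, τ₂, f̄, F̄`, witnessing data for `(β',σ') ~ (β,σ)`. -/
theorem taftRel_symm_data {K : Type*} [Field K] (m n : ℕ) (hm : 2 ≤ m) (hn : 3 ≤ n)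
    (q : K) (hq : IsPrimitiveRoot q m)
    (β β' σ σ' : K) (hβ : β ^ 2 = 1) (hβ' : β' ^ 2 = 1)
    (hσ2 : σ ^ 2 = 1) (hσ'2 : σ' ^ 2 = 1)
    (hσ : σ ^ Nat.gcd n (n - 2) = 1) (hσ' : σ' ^ Nat.gcd n (n - 2) = 1)
    (f F s t : ℕ) (hf : f ≤ m - 1) (hF : F ≤ m - 1) (hs : s ≤ n - 1) (ht : t ≤ n - 1)
    (htn : Nat.gcd t n = 1) (h2f : m ∣ 2 * f) (hnF : m ∣ n * F) (h2F : m ∣ 2 * F)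
    (hqf : q ^ f = β * β' * σ' ^ s) (hqF : q ^ F = σ * σ' ^ t)
    (τ₁ τ₂ f' F' : ℕ) (hτ₁ : τ₁ ≤ n - 1) (hτ₂ : τ₂ ≤ n - 1)
    (hf'b : f' ≤ m - 1) (hF'b : F' ≤ m - 1)
    (hτ₁def : ((t : ℤ) * τ₁) ≡ 1 [ZMOD (n : ℤ)])
    (hτ₂def : (τ₂ : ℤ) ≡ -((τ₁ : ℤ) * s) [ZMOD (n : ℤ)])
    (hf'def : (f' : ℤ) ≡ -(f : ℤ) - (F : ℤ) * τ₂ [ZMOD (m : ℤ)])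
    (hF'def : (F' : ℤ) ≡ -((F : ℤ) * τ₁) [ZMOD (m : ℤ)]) :
    Nat.gcd τ₁ n = 1 ∧ m ∣ 2 * f' ∧ m ∣ n * F' ∧ m ∣ 2 * F' ∧
      q ^ f' = β' * β * σ ^ τ₂ ∧ q ^ F' = σ' * σ ^ τ₁ ∧
      taftRel m n q (β', σ') (β, σ) :=
  taftRel_symm_data_general m n q hq β β' σ σ' hβ hβ' hσ2 hσ'2 hσ' f F s t h2f hnF h2F hqf hqF τ₁ τ₂
    f' F' hτ₁ hτ₂ hf'b hF'b hτ₁def hτ₂def hf'def hF'def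
end

section
/- Assume char K ≠ 2. Then the number of equivalence classes of the relation ~ on the set {(β,σ) ∈ K × K : β² = 1 and σ^{gcd(n,n−2)} = 1} equals 2 if m and n are both odd, equals 3 if m is odd and n is even, and equals 1 if m is even (regardless of the parity of n). -/
open Set

theorem ncard_classes_eq_ncard_image {α ι : Type*} {S : Set α} {r : α → α → Prop} (φ : α → ι)
    (h : ∀ p ∈ S, ∀ p' ∈ S, r p p' ↔ φ p = φ p') :
    {C : Set α | ∃ p ∈ S, C = {p' ∈ S | r p p'}}.ncard = (φ '' S).ncard := by
  have hclasses : {C : Set α | ∃ p ∈ S, C = {p' ∈ S | r p p'}} =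
      (fun i => {p' ∈ S | φ p' = i}) '' (φ '' S) := by
    ext C
    simp only [mem_ofPred_eq, mem_image, exists_exists_and_eq_and, eq_comm (b := C)]
    refine exists_congr fun p => and_congr_right fun hp => ?_
    rw [sep_ext_iff.mpr fun p' hp' => (h p hp p' hp').trans eq_comm]
  rw [hclasses, InjOn.ncard_image]
  rintro _ ⟨a, ha, rfl⟩ _ ⟨b, hb, rfl⟩ hab
  exact ((Set.ext_iff.mp hab a).mp ⟨ha, rfl⟩).2

theorem eq_of_mul_eq_one_of_sq_eq_one {M : Type*} [Monoid M] {x y : M} (hxy : x * y = 1)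
    (hy : y ^ 2 = 1) : x = y := by
  rw [← mul_one x, ← hy, sq, ← mul_assoc, hxy, one_mul]

theorem Odd.eq_zero_of_dvd_two_mul {m f : ℕ} (hm : Odd m) (hf : f ≤ m - 1) (hdvd : m ∣ 2 * f) :
    f = 0 :=
  Nat.eq_zero_of_dvd_of_lt ((Nat.coprime_two_right.mpr hm).dvd_of_dvd_mul_left hdvd)
    (by have := hm.pos; omega)

theorem sq_eq_one_of_pow_gcd_two_eq_one {M : Type*} [Monoid M] {n : ℕ} {σ : M}
    (hσ : σ ^ Nat.gcd n 2 = 1) : σ ^ 2 = 1 := by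
  obtain ⟨k, hk⟩ := Nat.gcd_dvd_right n 2
  rw [hk, pow_mul, hσ, one_pow]

theorem pow_eq_self_of_pow_gcd_two_eq_one {M : Type*} [Monoid M] {n t : ℕ} {σ : M}
    (hσ : σ ^ Nat.gcd n 2 = 1) (ht : Nat.gcd t n = 1) : σ ^ t = σ := by
  rcases Nat.even_or_odd n with he | ho
  · have htodd : Odd t := (Nat.Coprime.coprime_dvd_right he.two_dvd ht).odd_of_right
    rw [pow_eq_pow_mod t (sq_eq_one_of_pow_gcd_two_eq_one hσ), Nat.odd_iff.mp htodd, pow_one]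
  · rw [(Nat.coprime_two_right.mpr ho).gcd_eq_one, pow_one] at hσ
    rw [hσ, one_pow]

theorem IsPrimitiveRoot.pow_half_eq_neg_one {R : Type*} [CommRing R] [NoZeroDivisors R] {m : ℕ}
    {q : R} (hq : IsPrimitiveRoot q m) (hm : 0 < m) (he : Even m) : q ^ (m / 2) = -1 :=
  (hq.pow hm (Nat.div_two_mul_two_of_even he).symm).eq_neg_one_of_two_right

theorem IsPrimitiveRoot.exists_pow_eq_of_sq_eq_one {R : Type*} [CommRing R] [NoZeroDivisors R]
    {m : ℕ} {q : R} (hq : IsPrimitiveRoot q m) (hm : 0 < m) (he : Even m) {x : R}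
    (hx : x ^ 2 = 1) : ∃ f ≤ m - 1, m ∣ 2 * f ∧ q ^ f = x := by
  rcases sq_eq_one_iff.mp hx with rfl | rfl
  · exact ⟨0, by omega, dvd_zero m, pow_zero q⟩
  · exact ⟨m / 2, by omega, (Nat.mul_div_cancel' he.two_dvd).symm ▸ dvd_rfl,
      hq.pow_half_eq_neg_one hm he⟩

section Taft

variable {K : Type*} [Field K] {m n : ℕ} {q : K} {p p' : K × K}

theorem mem_taftSet_iff (hn : 2 ≤ n) :
    p ∈ taftSet K n ↔ p.1 ^ 2 = 1 ∧ p.2 ^ Nat.gcd n 2 = 1 := by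
  rw [taftSet, mem_ofPred_eq, Nat.gcd_self_sub_right hn]

theorem taftSet_eq_of_odd (hn : 2 ≤ n) (ho : Odd n) : taftSet K n = {(1, 1), (-1, 1)} := by
  ext ⟨β, σ⟩
  simp [mem_taftSet_iff hn, (Nat.coprime_two_right.mpr ho).gcd_eq_one, or_and_right]

theorem taftSet_eq_of_even (hn : 2 ≤ n) (he : Even n) :
    taftSet K n = {(1, 1), (-1, 1), (1, -1), (-1, -1)} := by
  ext ⟨β, σ⟩
  simp [mem_taftSet_iff hn, Nat.gcd_eq_right he.two_dvd]
  tauto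

theorem taftRel_of_even (hq : IsPrimitiveRoot q m) (hm : 0 < m) (he : Even m) (hn : 2 ≤ n)
    (hp : p ∈ taftSet K n) (hp' : p' ∈ taftSet K n) : taftRel m n q p p' := by
  obtain ⟨hβ, hσ⟩ := (mem_taftSet_iff hn).mp hp
  obtain ⟨hβ', hσ'⟩ := (mem_taftSet_iff hn).mp hp'
  obtain ⟨f, hf, hdf, hqf⟩ :=
    hq.exists_pow_eq_of_sq_eq_one hm he (x := p.1 * p'.1) (by rw [mul_pow, hβ, hβ', one_mul])
  have hF : ∃ F ≤ m - 1, m ∣ n * F ∧ m ∣ 2 * F ∧ q ^ F = p.2 * p'.2 := by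
    rcases Nat.even_or_odd n with hen | hno
    · obtain ⟨F, hF, hdF, hqF⟩ := hq.exists_pow_eq_of_sq_eq_one hm he (x := p.2 * p'.2)
        (by rw [mul_pow, sq_eq_one_of_pow_gcd_two_eq_one hσ, sq_eq_one_of_pow_gcd_two_eq_one hσ',
          one_mul])
      exact ⟨F, hF, hdF.trans (mul_dvd_mul_right hen.two_dvd F), hdF, hqF⟩
    · rw [(Nat.coprime_two_right.mpr hno).gcd_eq_one, pow_one] at hσ hσ'
      exact ⟨0, by omega, by simp, by simp, by rw [hσ, hσ', pow_zero, one_mul]⟩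
  obtain ⟨F, hF, hdnF, hd2F, hqF⟩ := hF
  exact ⟨f, F, 0, 1, hf, hF, by omega, by omega, Nat.gcd_one_left n, hdf, hdnF, hd2F,
    by rw [pow_zero, mul_one, hqf], by rw [pow_one, hqF]⟩

open Classical in
noncomputable def taftClassKey (p : K × K) : K × K := (p.2, if p.2 = 1 then p.1 else 1)

theorem taftClassKey_eq_iff :
    taftClassKey p = taftClassKey p' ↔ p.2 = p'.2 ∧ (p'.2 = 1 → p.1 = p'.1) := by
  rw [taftClassKey, taftClassKey, Prod.mk.injEq]
  refine and_congr_right fun h => ?_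
  rw [h]
  split_ifs with h1 <;> simp [h1]

theorem taftRel_iff_of_odd (hm : Odd m) (hn : 2 ≤ n) (hp : p ∈ taftSet K n)
    (hp' : p' ∈ taftSet K n) : taftRel m n q p p' ↔ taftClassKey p = taftClassKey p' := by
  obtain ⟨hβ, hσ⟩ := (mem_taftSet_iff hn).mp hp
  obtain ⟨hβ', hσ'⟩ := (mem_taftSet_iff hn).mp hp'
  have hσ'2 := sq_eq_one_of_pow_gcd_two_eq_one hσ'
  rw [taftClassKey_eq_iff]
  constructor
  · rintro ⟨f, F, s, t, hf, hF, -, -, ht, hdf, -, hdF, hqf, hqF⟩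
    rw [hm.eq_zero_of_dvd_two_mul hf hdf, pow_zero] at hqf
    rw [hm.eq_zero_of_dvd_two_mul hF hdF, pow_zero,
      pow_eq_self_of_pow_gcd_two_eq_one hσ' ht] at hqF
    refine ⟨eq_of_mul_eq_one_of_sq_eq_one hqF.symm hσ'2, fun h1 => ?_⟩
    rw [h1, one_pow, mul_one] at hqf
    exact eq_of_mul_eq_one_of_sq_eq_one hqf.symm hβ'
  · rintro ⟨hσσ', hβσ⟩
    have hs : ∃ s ≤ n - 1, p.1 * p'.1 * p'.2 ^ s = 1 := by
      by_cases hββ' : p.1 = p'.1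
      · exact ⟨0, by omega, by rw [hββ', pow_zero, mul_one, ← sq, hβ']⟩
      · have hσneg : p'.2 = -1 := (sq_eq_one_iff.mp hσ'2).resolve_left (mt hβσ hββ')
        have hβneg : p'.1 = -p.1 :=
          (sq_eq_sq_iff_eq_or_eq_neg.mp (hβ'.trans hβ.symm)).resolve_left (Ne.symm hββ')
        exact ⟨1, by omega, by rw [hσneg, hβneg, pow_one]; linear_combination hβ⟩
    obtain ⟨s, hs, hqs⟩ := hs
    exact ⟨0, 0, s, 1, by omega, by omega, hs, by omega, Nat.gcd_one_left n, by simp, by simp,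
      by simp, by rw [pow_zero, hqs], by rw [pow_zero, pow_one, hσσ', ← sq, hσ'2]⟩

theorem taftClassKey_image_of_odd (hn : 2 ≤ n) (ho : Odd n) :
    taftClassKey '' taftSet K n = {(1, 1), (1, -1)} := by
  simp [taftSet_eq_of_odd hn ho, image_insert_eq, taftClassKey]

theorem taftClassKey_image_of_even (hn : 2 ≤ n) (he : Even n) :
    taftClassKey '' taftSet K n = {(1, 1), (1, -1), (-1, 1)} := by
  have hkey : taftClassKey ((-1 : K), (-1 : K)) = (-1, 1) := by
    rw [taftClassKey]
    split_ifs with h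
    exacts [congrArg _ h, rfl]
  simp only [taftSet_eq_of_even hn he, image_insert_eq, image_singleton, hkey]
  simp [taftClassKey]

end Taft

/-- The number of equivalence classes of `~` on `taftSet K n` is `2` if `m` and `n` are both
odd, `3` if `m` is odd and `n` is even, and `1` if `m` is even. -/
theorem taftRel_ncard_classes {K : Type*} [Field K] (m n : ℕ) (hm : 2 ≤ m) (hn : 3 ≤ n)
    (q : K) (hq : IsPrimitiveRoot q m) (hchar : ringChar K ≠ 2) :
    (Odd m → Odd n →
      ({C : Set (K × K) | ∃ p ∈ taftSet K n,
        C = {p' ∈ taftSet K n | taftRel m n q p p'}}).ncard = 2) ∧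
    (Odd m → Even n →
      ({C : Set (K × K) | ∃ p ∈ taftSet K n,
        C = {p' ∈ taftSet K n | taftRel m n q p p'}}).ncard = 3) ∧
    (Even m →
      ({C : Set (K × K) | ∃ p ∈ taftSet K n,
        C = {p' ∈ taftSet K n | taftRel m n q p p'}}).ncard = 1) := by
  have hne : (1 : K) ≠ -1 := (Ring.neg_one_ne_one_of_char_ne_two hchar).symm
  refine ⟨fun hmo hno => ?_, fun hmo hen => ?_, fun hme => ?_⟩
  · rw [ncard_classes_eq_ncard_image taftClassKey
      fun p hp p' hp' => taftRel_iff_of_odd hmo (by omega) hp hp',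
      taftClassKey_image_of_odd (by omega) hno]
    exact ncard_pair (by simpa using hne)
  · rw [ncard_classes_eq_ncard_image taftClassKey
      fun p hp p' hp' => taftRel_iff_of_odd hmo (by omega) hp hp',
      taftClassKey_image_of_even (by omega) hen]
    exact ncard_eq_three.mpr ⟨_, _, _, by simpa using hne, by simpa using hne,
      by simp [hne], rfl⟩
  · have hS : (taftSet K n).Nonempty := ⟨(1, 1), one_pow 2, one_pow _⟩
    rw [ncard_classes_eq_ncard_image (fun _ => ()) fun p hp p' hp' =>
        iff_of_true (taftRel_of_even hq (by omega) hme (by omega) hp hp') rfl,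
      hS.image_const, ncard_singleton]
end

section
/- Assume char K ≠ 2, m is odd and n is even. Then there do not exist integers f, F ∈ {0,…,m−1} and s, t ∈ {0,…,n−1} with gcd(t,n) = 1, m ∣ 2f, m ∣ nF, m ∣ 2F, q^f = (−1)^{s+1} and q^F = (−1)^t. In particular the pairs (1,1) and (−1,−1) are not related under ~. -/
lemma Odd.eq_zero_of_dvd_two_mul_of_lt {m k : ℕ} (hm : Odd m) (hk : m ∣ 2 * k) (hkm : k < m) :
    k = 0 :=
  Nat.eq_zero_of_dvd_of_lt (hm.coprime_two_right.dvd_of_dvd_mul_left hk) hkm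

/-- Since `m` is odd, `F = 0`; since `n` is even, `t` is odd, so the right side is `-1 ≠ 1`. -/
lemma pow_ne_neg_one_pow_of_coprime_of_even {R : Type*} [Ring R] [Nontrivial R]
    (hR : ringChar R ≠ 2) (q : R) {m n F t : ℕ} (hm : Odd m) (hn : Even n) (hFm : F < m)
    (hmF : m ∣ 2 * F) (ht : t.Coprime n) : q ^ F ≠ (-1) ^ t := by
  have hF : F = 0 := hm.eq_zero_of_dvd_two_mul_of_lt hmF hFm
  have htodd : Odd t := (ht.coprime_dvd_right hn.two_dvd).odd_of_right
  rw [hF, pow_zero, htodd.neg_one_pow]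
  exact (Ring.neg_one_ne_one_of_char_ne_two hR).symm

theorem taftRel_not_one_one_negOne_negOne_general {K : Type*} [Field K] (m n : ℕ) (q : K)
    (hchar : ringChar K ≠ 2) (hmo : Odd m) (hne : Even n) :
    (¬ ∃ f F s t : ℕ, f ≤ m - 1 ∧ F ≤ m - 1 ∧ s ≤ n - 1 ∧ t ≤ n - 1 ∧
      Nat.gcd t n = 1 ∧ m ∣ 2 * f ∧ m ∣ n * F ∧ m ∣ 2 * F ∧
      q ^ f = (-1 : K) ^ (s + 1) ∧ q ^ F = (-1 : K) ^ t) ∧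
    ¬ taftRel m n q (1, 1) (-1, -1) := by
  have hpow : ∀ {F t : ℕ}, F ≤ m - 1 → m ∣ 2 * F → Nat.gcd t n = 1 → q ^ F ≠ (-1) ^ t :=
    fun hF hmF ht ↦ pow_ne_neg_one_pow_of_coprime_of_even hchar q hmo hne
      (Nat.lt_of_le_pred hmo.pos hF) hmF ht
  constructor
  · rintro ⟨f, F, s, t, -, hF, -, -, ht, -, -, hmF, -, hqF⟩
    exact hpow hF hmF ht hqF
  · rintro ⟨f, F, s, t, -, hF, -, -, ht, -, -, hmF, -, hqF⟩
    exact hpow hF hmF ht (by simpa using hqF)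

/-- If `char K ≠ 2`, `m` is odd and `n` is even, there is no admissible quadruple `(f, F, s, t)`
with `q^f = (-1)^{s+1}` and `q^F = (-1)^t`; in particular `(1,1)` and `(-1,-1)` are not
related under `~`. -/
theorem taftRel_not_one_one_negOne_negOne {K : Type*} [Field K] (m n : ℕ)
    (hm : 2 ≤ m) (hn : 3 ≤ n) (q : K) (hq : IsPrimitiveRoot q m)
    (hchar : ringChar K ≠ 2) (hmo : Odd m) (hne : Even n) :
    (¬ ∃ f F s t : ℕ, f ≤ m - 1 ∧ F ≤ m - 1 ∧ s ≤ n - 1 ∧ t ≤ n - 1 ∧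
      Nat.gcd t n = 1 ∧ m ∣ 2 * f ∧ m ∣ n * F ∧ m ∣ 2 * F ∧
      q ^ f = (-1 : K) ^ (s + 1) ∧ q ^ F = (-1 : K) ^ t) ∧
    ¬ taftRel m n q (1, 1) (-1, -1) :=
  taftRel_not_one_one_negOne_negOne_general m n q hchar hmo hne
end

section
/- Assume m and n are both even. Then every pair (β,σ) ∈ K × K with β² = 1 and σ² = 1 satisfies (β,σ) ~ (1,1). In particular all four pairs (1,1), (−1,1), (1,−1), (−1,−1) lie in a single equivalence class of ~. -/
/-! For even `m`, both square roots of unity are powers `q^f` with `m ∣ 2f` (namely `f = 0` and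
`f = m/2`), and for even `n` the condition `m ∣ 2F` already forces `m ∣ nF`. So `(β, σ) ~ (1, 1)`
is witnessed by `s = 0`, `t = 1`. -/

namespace IsPrimitiveRoot

variable {R : Type*} [CommRing R] [IsDomain R] {m : ℕ} {q : R}

theorem pow_div_two_eq_neg_one (hq : IsPrimitiveRoot q m) (hm : m ≠ 0) (hme : Even m) :
    q ^ (m / 2) = -1 := by
  have hhalf : m / 2 ≠ 0 := by obtain ⟨k, rfl⟩ := hme; omega
  have hsq : IsPrimitiveRoot (q ^ (m / 2)) (m / (m / 2)) :=
    hq.pow_of_dvd hhalf (Nat.div_dvd_of_dvd hme.two_dvd)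
  rw [Nat.div_div_self hme.two_dvd hm] at hsq
  exact hsq.eq_neg_one_of_two_right

theorem exists_pow_eq_of_sq_eq_one_s9 (hq : IsPrimitiveRoot q m) (hm : m ≠ 0) (hme : Even m)
    {x : R} (hx : x ^ 2 = 1) : ∃ f < m, m ∣ 2 * f ∧ q ^ f = x := by
  rcases sq_eq_one_iff.mp hx with rfl | rfl
  · exact ⟨0, Nat.pos_of_ne_zero hm, dvd_zero m, pow_zero q⟩
  · refine ⟨m / 2, Nat.div_lt_self (Nat.pos_of_ne_zero hm) one_lt_two, ?_,
      hq.pow_div_two_eq_neg_one hm hme⟩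
    rw [Nat.two_mul_div_two_of_even hme]

end IsPrimitiveRoot

theorem taftRel_one_one_of_sq_eq_one {K : Type*} [Field K] {m n : ℕ} {q : K}
    (hq : IsPrimitiveRoot q m) (hm : m ≠ 0) (hme : Even m) (hn : 2 ≤ n) (hne : Even n)
    {β σ : K} (hβ : β ^ 2 = 1) (hσ : σ ^ 2 = 1) : taftRel m n q (β, σ) (1, 1) := by
  obtain ⟨f, hfm, hf, rfl⟩ := hq.exists_pow_eq_of_sq_eq_one_s9 hm hme hβ
  obtain ⟨F, hFm, hF, rfl⟩ := hq.exists_pow_eq_of_sq_eq_one_s9 hm hme hσ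
  have hnF : m ∣ n * F := by
    obtain ⟨k, rfl⟩ := hne
    exact (hF.mul_left k).trans ⟨1, by ring⟩
  exact ⟨f, F, 0, 1, by omega, by omega, by omega, by omega, Nat.gcd_one_left n, hf, hnF, hF,
    by simp, by simp⟩

/-- If `m` and `n` are both even then every pair `(β,σ)` with `β² = 1` and `σ² = 1` is related
to `(1,1)` under `~`; in particular all four pairs `(±1, ±1)` lie in a single class. -/
theorem taftRel_even_even {K : Type*} [Field K] (m n : ℕ) (hm : 2 ≤ m) (hn : 3 ≤ n)
    (q : K) (hq : IsPrimitiveRoot q m) (hme : Even m) (hne : Even n) :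
    (∀ β σ : K, β ^ 2 = 1 → σ ^ 2 = 1 → taftRel m n q (β, σ) (1, 1)) ∧
    taftRel m n q ((1 : K), (1 : K)) (1, 1) ∧
    taftRel m n q ((-1 : K), (1 : K)) (1, 1) ∧
    taftRel m n q ((1 : K), (-1 : K)) (1, 1) ∧
    taftRel m n q ((-1 : K), (-1 : K)) (1, 1) := by
  have hrel : ∀ β σ : K, β ^ 2 = 1 → σ ^ 2 = 1 → taftRel m n q (β, σ) (1, 1) :=
    fun _ _ => taftRel_one_one_of_sq_eq_one hq (by omega) hme (by omega) hne
  exact ⟨hrel, hrel _ _ (one_pow 2) (one_pow 2), hrel _ _ neg_one_sq (one_pow 2),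
    hrel _ _ (one_pow 2) neg_one_sq, hrel _ _ neg_one_sq neg_one_sq⟩
end

section
/- Assume char K ≠ 2, m is odd and n is even. Then for all β, β', σ, σ' ∈ K with β² = β'² = 1 and σ² = σ'² = 1, one has (β,σ) ~ (β',σ') if and only if σ = σ' and (σ = −1 or β = β'). Consequently the equivalence classes of ~ are exactly {(1,1)}, {(−1,1)} and {(1,−1),(−1,−1)}. -/
/-!
Since `m` is odd, `m ∣ 2f` and `m ∣ 2F` with `f, F < m` force `f = F = 0`, so `q` drops out and
`(β, σ) ~ (β', σ')` says `β β' σ'^s = 1` and `σ σ'^t = 1` for some `s` and some `t` prime to `n`.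
As `n` is even, such `t` are odd, so `σ'^t = σ'` and the second condition reads `σ = σ'`; as `σ'^s`
runs through `{1, σ'}`, the first reads `β β' ∈ {1, σ'}`, which for `σ = σ' = ±1` is the claim.
-/

section SqEqOne

variable {M : Type*} [Monoid M] {x y : M}

lemma pow_eq_self_of_sq_eq_one_of_odd (hx : x ^ 2 = 1) {k : ℕ} (hk : Odd k) : x ^ k = x := by
  rw [pow_eq_pow_mod k hx, Nat.odd_iff.mp hk, pow_one]

lemma pow_eq_one_or_self_of_sq_eq_one (hx : x ^ 2 = 1) (k : ℕ) : x ^ k = 1 ∨ x ^ k = x := by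
  rcases Nat.even_or_odd k with hk | hk
  · left
    rw [pow_eq_pow_mod k hx, Nat.even_iff.mp hk, pow_zero]
  · exact Or.inr (pow_eq_self_of_sq_eq_one_of_odd hx hk)

lemma mul_eq_one_iff_eq_of_sq_eq_one (hy : y ^ 2 = 1) : x * y = 1 ↔ x = y := by
  rw [sq] at hy
  constructor
  · intro h
    calc x = x * (y * y) := by rw [hy, mul_one]
      _ = y := by rw [← mul_assoc, h, one_mul]
  · rintro rfl
    exact hy

lemma exists_pow_le_mul_eq_one_iff {n : ℕ} (hn : 2 ≤ n) (hy : y ^ 2 = 1) :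
    (∃ s ≤ n - 1, x * y ^ s = 1) ↔ x = 1 ∨ x * y = 1 := by
  constructor
  · rintro ⟨s, -, hs⟩
    rcases pow_eq_one_or_self_of_sq_eq_one hy s with h | h <;> rw [h] at hs
    · exact Or.inl (by simpa using hs)
    · exact Or.inr hs
  · rintro (rfl | h)
    · exact ⟨0, Nat.zero_le _, by simp⟩
    · exact ⟨1, by omega, by rwa [pow_one]⟩

lemma exists_coprime_pow_le_mul_eq_one_iff {n : ℕ} (hn : 2 ≤ n) (he : Even n)
    (hy : y ^ 2 = 1) : (∃ t ≤ n - 1, t.Coprime n ∧ x * y ^ t = 1) ↔ x = y := by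
  rw [← mul_eq_one_iff_eq_of_sq_eq_one hy]
  constructor
  · rintro ⟨t, -, ht, h⟩
    have hodd : Odd t := (ht.coprime_dvd_right he.two_dvd).odd_of_right
    rwa [pow_eq_self_of_sq_eq_one_of_odd hy hodd] at h
  · intro h
    exact ⟨1, by omega, Nat.coprime_one_left n, by rwa [pow_one]⟩

end SqEqOne

lemma Nat.gcd_self_sub_two_of_even {n : ℕ} (hn : 2 ≤ n) (he : Even n) : n.gcd (n - 2) = 2 := by
  rw [Nat.gcd_self_sub_right hn, Nat.gcd_eq_right he.two_dvd]

lemma Nat.eq_zero_of_dvd_two_mul_of_le_pred {m f : ℕ} (hm : Odd m) (hdvd : m ∣ 2 * f)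
    (hf : f ≤ m - 1) : f = 0 :=
  Nat.eq_zero_of_dvd_of_lt (hm.coprime_two_right.dvd_of_dvd_mul_left hdvd)
    (by obtain ⟨k, rfl⟩ := hm; omega)

section Taft

variable {K : Type*} [Field K]

lemma mem_taftSet_of_even {n : ℕ} (hn : 2 ≤ n) (he : Even n) {p : K × K} :
    p ∈ taftSet K n ↔ p.1 ^ 2 = 1 ∧ p.2 ^ 2 = 1 := by
  show _ ∧ _ ↔ _
  rw [Nat.gcd_self_sub_two_of_even hn he]

lemma taftRel_iff_of_odd_s10 {m n : ℕ} {q : K} (hm : Odd m) {p p' : K × K} :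
    taftRel m n q p p' ↔ (∃ s ≤ n - 1, p.1 * p'.1 * p'.2 ^ s = 1) ∧
      (∃ t ≤ n - 1, t.Coprime n ∧ p.2 * p'.2 ^ t = 1) := by
  constructor
  · rintro ⟨f, F, s, t, hf, hF, hs, ht, hgcd, hf2, -, hF2, hβ, hσ⟩
    obtain rfl := Nat.eq_zero_of_dvd_two_mul_of_le_pred hm hf2 hf
    obtain rfl := Nat.eq_zero_of_dvd_two_mul_of_le_pred hm hF2 hF
    rw [pow_zero] at hβ hσ
    exact ⟨⟨s, hs, hβ.symm⟩, ⟨t, ht, hgcd, hσ.symm⟩⟩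
  · rintro ⟨⟨s, hs, hβ⟩, ⟨t, ht, hgcd, hσ⟩⟩
    exact ⟨0, 0, s, t, Nat.zero_le _, Nat.zero_le _, hs, ht, hgcd, by simp, by simp, by simp,
      by rw [pow_zero, hβ], by rw [pow_zero, hσ]⟩

lemma taftRel_iff_of_odd_of_even {m n : ℕ} {q : K} (hm : Odd m) (hn : 2 ≤ n) (he : Even n)
    {β β' σ σ' : K} (hβ : β ^ 2 = 1) (hβ' : β' ^ 2 = 1) (hσ : σ ^ 2 = 1) (hσ' : σ' ^ 2 = 1) :
    taftRel m n q (β, σ) (β', σ') ↔ σ = σ' ∧ (σ = -1 ∨ β = β') := by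
  rw [taftRel_iff_of_odd_s10 hm, exists_pow_le_mul_eq_one_iff hn hσ',
    exists_coprime_pow_le_mul_eq_one_iff hn he hσ']
  simp only [sq_eq_one_iff] at hβ hβ' hσ hσ'
  rcases hβ with rfl | rfl <;> rcases hβ' with rfl | rfl <;> rcases hσ with rfl | rfl <;>
    rcases hσ' with rfl | rfl <;> simp [eq_comm]

lemma mem_taftSet_sep_taftRel_iff {m n : ℕ} {q : K} (hm : Odd m) (hn : 2 ≤ n) (he : Even n)
    {β σ : K} (hβ : β ^ 2 = 1) (hσ : σ ^ 2 = 1) {p' : K × K} :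
    p' ∈ {p' ∈ taftSet K n | taftRel m n q (β, σ) p'} ↔
      p'.1 ^ 2 = 1 ∧ p'.2 = σ ∧ (σ = -1 ∨ p'.1 = β) := by
  rw [Set.mem_sep_iff, mem_taftSet_of_even hn he]
  constructor
  · rintro ⟨⟨hβ', hσ'⟩, hrel⟩
    obtain ⟨rfl, h⟩ := (taftRel_iff_of_odd_of_even hm hn he hβ hβ' hσ hσ').mp hrel
    exact ⟨hβ', rfl, h.imp_right Eq.symm⟩
  · rintro ⟨hβ', rfl, h⟩
    exact ⟨⟨hβ', hσ⟩, (taftRel_iff_of_odd_of_even hm hn he hβ hβ' hσ hσ).mpr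
      ⟨rfl, h.imp_right Eq.symm⟩⟩

end Taft

theorem taftRel_classification_odd_even_general {K : Type*} [Field K] (m n : ℕ)
    (hn : 3 ≤ n) (q : K)
    (hchar : ringChar K ≠ 2) (hmo : Odd m) (hne : Even n) :
    (∀ β β' σ σ' : K, β ^ 2 = 1 → β' ^ 2 = 1 → σ ^ 2 = 1 → σ' ^ 2 = 1 →
      (taftRel m n q (β, σ) (β', σ') ↔ (σ = σ' ∧ (σ = -1 ∨ β = β')))) ∧
    {p' ∈ taftSet K n | taftRel m n q (1, 1) p'} = {((1 : K), (1 : K))} ∧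
    {p' ∈ taftSet K n | taftRel m n q (-1, 1) p'} = {((-1 : K), (1 : K))} ∧
    {p' ∈ taftSet K n | taftRel m n q (1, -1) p'} =
      {((1 : K), (-1 : K)), ((-1 : K), (-1 : K))} := by
  have hn2 : 2 ≤ n := by omega
  have hne1 : (-1 : K) ≠ 1 := Ring.neg_one_ne_one_of_char_ne_two hchar
  refine ⟨fun _ _ _ _ ↦ taftRel_iff_of_odd_of_even hmo hn2 hne, ?_, ?_, ?_⟩ <;>
    ext ⟨β', σ'⟩ <;>
    simp only [mem_taftSet_sep_taftRel_iff hmo hn2 hne, one_pow, neg_one_sq,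
      Set.mem_singleton_iff, Set.mem_insert_iff, Prod.mk.injEq, sq_eq_one_iff, hne1.symm,
      false_or] <;>
    tauto

/-- If `char K ≠ 2`, `m` is odd and `n` is even, then `(β,σ) ~ (β',σ')` iff `σ = σ'` and
(`σ = -1` or `β = β'`); consequently the equivalence classes of `~` are exactly
`{(1,1)}`, `{(-1,1)}` and `{(1,-1), (-1,-1)}`. -/
theorem taftRel_classification_odd_even {K : Type*} [Field K] (m n : ℕ)
    (hm : 2 ≤ m) (hn : 3 ≤ n) (q : K) (hq : IsPrimitiveRoot q m)
    (hchar : ringChar K ≠ 2) (hmo : Odd m) (hne : Even n) :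
    (∀ β β' σ σ' : K, β ^ 2 = 1 → β' ^ 2 = 1 → σ ^ 2 = 1 → σ' ^ 2 = 1 →
      (taftRel m n q (β, σ) (β', σ') ↔ (σ = σ' ∧ (σ = -1 ∨ β = β')))) ∧
    {p' ∈ taftSet K n | taftRel m n q (1, 1) p'} = {((1 : K), (1 : K))} ∧
    {p' ∈ taftSet K n | taftRel m n q (-1, 1) p'} = {((-1 : K), (1 : K))} ∧
    {p' ∈ taftSet K n | taftRel m n q (1, -1) p'} =
      {((1 : K), (-1 : K)), ((-1 : K), (-1 : K))} :=
  taftRel_classification_odd_even_general m n hn q hchar hmo hne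
end

section
/- Assume char K ≠ 2 and that both m and n are odd. Then every σ ∈ K with σ^{gcd(n,n−2)} = 1 equals 1, and for all β, β' ∈ K with β² = β'² = 1 one has (β,1) ~ (β',1) if and only if β = β'. Consequently ~ has exactly the two equivalence classes {(1,1)} and {(−1,1)}. -/
theorem Nat.gcd_self_sub_two_of_odd {n : ℕ} (hn : Odd n) : Nat.gcd n (n - 2) = 1 := by
  rcases le_or_gt 2 n with h2 | h2
  · exact (Nat.coprime_self_sub_right h2).mpr hn.coprime_two_right
  · obtain rfl : n = 1 := by rw [Nat.odd_iff] at hn; omega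
    rfl

theorem mem_taftSet_iff_of_odd {K : Type*} [Field K] {n : ℕ} (hn : Odd n) {p : K × K} :
    p ∈ taftSet K n ↔ p.1 ^ 2 = 1 ∧ p.2 = 1 := by
  simp only [taftSet, Set.mem_ofPred_eq, Nat.gcd_self_sub_two_of_odd hn, pow_one]

theorem taftRel_iff_of_odd_s11 {K : Type*} [Field K] {m n : ℕ} (q : K) (hm : Odd m) (hn : Odd n)
    {β β' : K} (hβ : β ^ 2 = 1) (hβ' : β' ^ 2 = 1) :
    taftRel m n q (β, 1) (β', 1) ↔ β = β' := by
  constructor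
  · rintro ⟨f, _, _, _, hf, _, _, _, _, hmf, _, _, hqf, _⟩
    have hf0 : f = 0 :=
      Nat.eq_zero_of_dvd_of_lt (hm.coprime_two_right.dvd_of_dvd_mul_left hmf)
        (by have := hm.pos; omega)
    subst hf0
    simp only [pow_zero, one_pow, mul_one] at hqf
    linear_combination β * hqf + β' * hβ
  · rintro rfl
    -- `gcd(n - 1, n) = 1` makes `t = n - 1` an admissible exponent for every `n ≥ 1`.
    refine ⟨0, 0, 0, n - 1, Nat.zero_le _, Nat.zero_le _, Nat.zero_le _, le_rfl,
      (Nat.coprime_self_sub_left hn.pos).mpr (Nat.coprime_one_left n),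
      dvd_zero _, dvd_zero _, dvd_zero _, ?_, by simp⟩
    rw [pow_zero, one_pow, mul_one, ← sq, hβ]

theorem taftRel_class_eq_singleton {K : Type*} [Field K] {m n : ℕ} (q : K) (hm : Odd m)
    (hn : Odd n) {p : K × K} (hp : p ∈ taftSet K n) :
    {p' ∈ taftSet K n | taftRel m n q p p'} = {p} := by
  obtain ⟨β, σ⟩ := p
  obtain ⟨hβ, rfl : σ = 1⟩ := (mem_taftSet_iff_of_odd hn).mp hp
  ext ⟨β', σ'⟩
  simp only [Set.mem_ofPred_eq, Set.mem_singleton_iff, mem_taftSet_iff_of_odd hn, Prod.mk.injEq]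
  constructor
  · rintro ⟨⟨hβ', rfl⟩, hrel⟩
    exact ⟨((taftRel_iff_of_odd_s11 q hm hn hβ hβ').mp hrel).symm, rfl⟩
  · rintro ⟨rfl, rfl⟩
    exact ⟨⟨hβ, rfl⟩, (taftRel_iff_of_odd_s11 q hm hn hβ hβ).mpr rfl⟩

theorem taftRel_classification_odd_odd_general {K : Type*} [Field K] (m n : ℕ)
    (q : K) (hmo : Odd m) (hno : Odd n) :
    (∀ σ : K, σ ^ Nat.gcd n (n - 2) = 1 → σ = 1) ∧
    (∀ β β' : K, β ^ 2 = 1 → β' ^ 2 = 1 →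
      (taftRel m n q (β, 1) (β', 1) ↔ β = β')) ∧
    {C : Set (K × K) | ∃ p ∈ taftSet K n,
      C = {p' ∈ taftSet K n | taftRel m n q p p'}} =
      {{((1 : K), (1 : K))}, {((-1 : K), (1 : K))}} := by
  refine ⟨fun σ hσ => by rwa [Nat.gcd_self_sub_two_of_odd hno, pow_one] at hσ,
    fun β β' => taftRel_iff_of_odd_s11 q hmo hno, ?_⟩
  have hclasses : {C : Set (K × K) | ∃ p ∈ taftSet K n,
      C = {p' ∈ taftSet K n | taftRel m n q p p'}} = {C | ∃ p ∈ taftSet K n, C = {p}} := by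
    ext C
    exact exists_congr fun p => and_congr_right fun hp => by
      rw [taftRel_class_eq_singleton q hmo hno hp]
  rw [hclasses]
  ext C
  simp [mem_taftSet_iff_of_odd hno]

/-- If `char K ≠ 2` and `m`, `n` are both odd, then every `σ` with `σ^{gcd(n,n-2)} = 1`
equals `1`, and `(β,1) ~ (β',1)` iff `β = β'`; consequently `~` has exactly the two
equivalence classes `{(1,1)}` and `{(-1,1)}`. -/
theorem taftRel_classification_odd_odd {K : Type*} [Field K] (m n : ℕ)
    (hm : 2 ≤ m) (hn : 3 ≤ n) (q : K) (hq : IsPrimitiveRoot q m)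
    (hchar : ringChar K ≠ 2) (hmo : Odd m) (hno : Odd n) :
    (∀ σ : K, σ ^ Nat.gcd n (n - 2) = 1 → σ = 1) ∧
    (∀ β β' : K, β ^ 2 = 1 → β' ^ 2 = 1 →
      (taftRel m n q (β, 1) (β', 1) ↔ β = β')) ∧
    {C : Set (K × K) | ∃ p ∈ taftSet K n,
      C = {p' ∈ taftSet K n | taftRel m n q p p'}} =
      {{((1 : K), (1 : K))}, {((-1 : K), (1 : K))}} :=
  taftRel_classification_odd_odd_general m n q hmo hno
end
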